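/- Let (X, M, μ) be a measure space and suppose L^q(μ) ⊆ L^p(μ) for some 1 ≤ p < q < ∞. Then sup{μ(E) : E ∈ M, μ(E) < ∞} < ∞. -/

import Mathlib

/-!
By the closed graph theorem the inclusion `L^q ⊆ L^p` is a bounded operator, say of norm `C`.
Testing it on indicators gives `μ(E)^(1/p) ≤ C μ(E)^(1/q)`, and since `1/q < 1/p` this bounds
`μ(E)` by `C^(1/(1/p - 1/q))` whenever `0 < μ(E) < ∞`.
-/

open MeasureTheory ENNReal

theorem Real.le_rpow_inv_sub_of_rpow_le_mul_rpow {t C a b : ℝ} (ht : 0 < t) (hba : b < a)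
    (h : t ^ a ≤ C * t ^ b) : t ≤ C ^ (a - b)⁻¹ := by
  have hpow : t ^ (a - b) ≤ C := by
    rwa [Real.rpow_sub ht, div_le_iff₀ (Real.rpow_pos_of_pos ht b)]
  calc t = (t ^ (a - b)) ^ (a - b)⁻¹ := by
        rw [← Real.rpow_mul ht.le, mul_inv_cancel₀ (sub_pos.2 hba).ne', Real.rpow_one]
    _ ≤ C ^ (a - b)⁻¹ :=
        Real.rpow_le_rpow (Real.rpow_nonneg ht.le _) hpow (inv_nonneg.2 (sub_pos.2 hba).le)

theorem ENNReal.one_div_toReal_lt_one_div_toReal {p q : ℝ≥0∞} (hp : p ≠ 0) (hpq : p < q) :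
    1 / q.toReal < 1 / p.toReal := by
  rw [one_div, one_div, ← ENNReal.toReal_inv, ← ENNReal.toReal_inv]
  exact (ENNReal.toReal_lt_toReal (by simpa using hpq.ne_bot) (by simpa using hp)).2
    (ENNReal.inv_lt_inv.2 hpq)

namespace MeasureTheory.Lp

variable {α E : Type*} [MeasurableSpace α] {μ : Measure α} {p q : ℝ≥0∞}
  [NormedAddCommGroup E] [NormedSpace ℝ E]

noncomputable def inclusionₗ (h : ∀ f : α → E, MemLp f q μ → MemLp f p μ) :
    Lp E q μ →ₗ[ℝ] Lp E p μ where
  toFun f := (h f (Lp.memLp f)).toLp f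
  map_add' f g := by
    rw [← MemLp.toLp_add]
    exact MemLp.toLp_congr _ _ (coeFn_add f g)
  map_smul' c f := by
    rw [RingHom.id_apply, ← MemLp.toLp_const_smul]
    exact MemLp.toLp_congr _ _ (coeFn_smul c f)

theorem coeFn_inclusionₗ (h : ∀ f : α → E, MemLp f q μ → MemLp f p μ)
    (f : Lp E q μ) : inclusionₗ h f =ᵐ[μ] f :=
  MemLp.coeFn_toLp (h f (Lp.memLp f))

variable [CompleteSpace E] [Fact (1 ≤ p)] [Fact (1 ≤ q)]

noncomputable def inclusion (h : ∀ f : α → E, MemLp f q μ → MemLp f p μ) :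
    Lp E q μ →L[ℝ] Lp E p μ :=
  .ofSeqClosedGraph (g := inclusionₗ h) fun u f g hu hTu => by
    ext1
    have hTu' := (tendstoInMeasure_of_tendsto_Lp hTu).congr_left fun n => coeFn_inclusionₗ h (u n)
    exact (tendstoInMeasure_ae_unique hTu' (tendstoInMeasure_of_tendsto_Lp hu)).trans
      (coeFn_inclusionₗ h f).symm

theorem coeFn_inclusion (h : ∀ f : α → E, MemLp f q μ → MemLp f p μ) (f : Lp E q μ) :
    inclusion h f =ᵐ[μ] f :=
  coeFn_inclusionₗ h f

theorem inclusion_indicatorConstLp (h : ∀ f : α → E, MemLp f q μ → MemLp f p μ)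
    {s : Set α} (hs : MeasurableSet s) (hμs : μ s ≠ ∞) (c : E) :
    inclusion h (indicatorConstLp q hs hμs c) = indicatorConstLp p hs hμs c := by
  ext1
  filter_upwards [coeFn_inclusion h (indicatorConstLp q hs hμs c),
    indicatorConstLp_coeFn (p := q) (c := c), indicatorConstLp_coeFn (p := p) (c := c)]
    with x h1 h2 h3
  rw [h1, h2, h3]

end MeasureTheory.Lp

namespace MeasureTheory

variable {α : Type*} [MeasurableSpace α] {μ : Measure α} {p q : ℝ≥0∞} [Fact (1 ≤ p)] [Fact (1 ≤ q)]

theorem exists_measureReal_rpow_le_mul_rpow_of_memLp_imp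
    (h : ∀ f : α → ℝ, MemLp f q μ → MemLp f p μ) :
    ∃ C, ∀ s, MeasurableSet s → μ s ≠ ∞ → μ s ≠ 0 →
      μ.real s ^ (1 / p.toReal) ≤ C * μ.real s ^ (1 / q.toReal) := by
  refine ⟨‖Lp.inclusion h‖, fun s hs hμs hμs₀ => ?_⟩
  have hp : p ≠ 0 := (zero_lt_one.trans_le Fact.out).ne'
  have hq : q ≠ 0 := (zero_lt_one.trans_le Fact.out).ne'
  simpa [Lp.inclusion_indicatorConstLp, norm_indicatorConstLp' hp hμs₀,
    norm_indicatorConstLp' hq hμs₀] using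
    (Lp.inclusion h).le_opNorm (indicatorConstLp q hs hμs (1 : ℝ))

end MeasureTheory

theorem stmt_4_general {X : Type*} [MeasurableSpace X] (μ : Measure X)
    (p q : ℝ≥0∞) (hp : 1 ≤ p) (hpq : p < q)
    (hincl : ∀ f : X → ℝ, MemLp f q μ → MemLp f p μ) :
    sSup (μ '' {E : Set X | MeasurableSet E ∧ μ E < ∞}) < ∞ := by
  have : Fact (1 ≤ p) := ⟨hp⟩
  have : Fact (1 ≤ q) := ⟨hp.trans hpq.le⟩
  obtain ⟨C, hC⟩ := exists_measureReal_rpow_le_mul_rpow_of_memLp_imp hincl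
  have hexp := one_div_toReal_lt_one_div_toReal (zero_lt_one.trans_le hp).ne' hpq
  refine (sSup_le ?_).trans_lt (ofReal_lt_top (r := C ^ (1 / p.toReal - 1 / q.toReal)⁻¹))
  rintro _ ⟨s, ⟨hs, hμs⟩, rfl⟩
  rcases eq_or_ne (μ s) 0 with hμs₀ | hμs₀
  · simp [hμs₀]
  rw [← ofReal_measureReal hμs.ne]
  exact ofReal_le_ofReal <| Real.le_rpow_inv_sub_of_rpow_le_mul_rpow
    (ENNReal.toReal_pos hμs₀ hμs.ne) hexp (hC s hs hμs.ne hμs₀)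

theorem stmt_4 {X : Type*} [MeasurableSpace X] (μ : Measure X)
    (p q : ℝ≥0∞) (hp : 1 ≤ p) (hpq : p < q) (hq : q < ∞)
    (hincl : ∀ f : X → ℝ, MemLp f q μ → MemLp f p μ) :
    sSup (μ '' {E : Set X | MeasurableSet E ∧ μ E < ∞}) < ∞ :=
  stmt_4_general μ p q hp hpq hincl
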